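/- The comultiplication of the modular automorphism of the left integral is given by Δ(σ(a)) = (S² ⊗ σ)(Δ(a)), i.e. Δ(σ(a)) = Σ S²(a₍₁₎) ⊗ σ(a₍₂₎), for every a ∈ A. -/

import Mathlib

open TensorProduct HopfAlgebra

/-!
Slicing `∑ (S(a₍₁₎) ⊗ 1) Δ(a₍₂₎) = 1 ⊗ a` with `x ↦ (id ⊗ φ)(x Δ(b))` gives strong left
invariance, `∑ b₍₁₎ φ(a b₍₂₎) = S(∑ a₍₁₎ φ(a₍₂₎ b))`. Slicing `Δ(σ(a))` with `φ(b ·)` and using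
strong invariance twice, with `φ(c ·) = φ(· σ(c))` in between, gives `S²(∑ a₍₁₎ φ(b σ(a₍₂₎)))`,
the same slice of `(S² ⊗ σ)(Δ(a))`. Over a field the functionals `φ(b ·)` separate points of `A`
by faithfulness, hence their slices separate points of `A ⊗ A`.
-/

namespace TensorProduct

section Module

variable {R M N : Type*} [CommSemiring R] [AddCommMonoid M] [Module R M]
  [AddCommMonoid N] [Module R N]

/-- The slice map `id ⊗ f : M ⊗ N → M`. -/
def sliceRight (f : N →ₗ[R] R) : M ⊗[R] N →ₗ[R] M :=
  TensorProduct.rid R M ∘ₗ LinearMap.lTensor M f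

@[simp]
lemma sliceRight_tmul (f : N →ₗ[R] R) (m : M) (n : N) :
    sliceRight f (m ⊗ₜ n) = f n • m := by
  simp [sliceRight]

lemma sliceRight_map {M' N' : Type*} [AddCommMonoid M'] [Module R M'] [AddCommMonoid N']
    [Module R N'] (f : N' →ₗ[R] R) (g : M →ₗ[R] M') (h : N →ₗ[R] N') (x : M ⊗[R] N) :
    sliceRight f (map g h x) = g (sliceRight (f ∘ₗ h) x) := by
  induction x using TensorProduct.induction_on with
  | zero => simp
  | tmul m n => simp
  | add x y hx hy => simp only [map_add, hx, hy]

lemma apply_equivFinsuppOfBasisLeft_apply {ι : Type*} [DecidableEq ι] (ℬ : Module.Basis ι R M)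
    (f : N →ₗ[R] R) (x : M ⊗[R] N) (k : ι) :
    f (equivFinsuppOfBasisLeft ℬ x k) = ℬ.coord k (sliceRight f x) := by
  induction x using TensorProduct.induction_on with
  | zero => simp
  | tmul m n => simp [mul_comm]
  | add x y hx hy => simp only [map_add, Finsupp.add_apply, hx, hy]

lemma eq_zero_of_forall_sliceRight_eq_zero [Module.Free R M] {ι : Type*} (f : ι → N →ₗ[R] R)
    (hf : ∀ n, (∀ i, f i n = 0) → n = 0) (x : M ⊗[R] N)
    (hx : ∀ i, sliceRight (f i) x = 0) : x = 0 := by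
  classical
  let ℬ := Module.Free.chooseBasis R M
  refine (equivFinsuppOfBasisLeft ℬ).map_eq_zero_iff.mp (Finsupp.ext fun k => hf _ fun i => ?_)
  rw [apply_equivFinsuppOfBasisLeft_apply, hx, map_zero]

end Module

section Algebra

variable {R A B : Type*} [CommSemiring R] [Semiring A] [Algebra R A] [Semiring B] [Algebra R B]

lemma sliceRight_tmul_one_mul (f : B →ₗ[R] R) (a : A) (w : A ⊗[R] B) :
    sliceRight f ((a ⊗ₜ 1) * w) = a * sliceRight f w := by
  induction w using TensorProduct.induction_on with
  | zero => simp
  | tmul x y => simp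
  | add x y hx hy => simp only [mul_add, map_add, hx, hy]

lemma sliceRight_one_tmul_mul (f : B →ₗ[R] R) (b : B) (w : A ⊗[R] B) :
    sliceRight f ((1 ⊗ₜ b) * w) = sliceRight (f ∘ₗ LinearMap.mulLeft R b) w := by
  induction w using TensorProduct.induction_on with
  | zero => simp
  | tmul x y => simp
  | add x y hx hy => simp only [mul_add, map_add, hx, hy]

end Algebra

end TensorProduct

namespace HopfAlgebra

open Coalgebra

variable {R A : Type*} [CommSemiring R] [Semiring A] [HopfAlgebra R A]

def antipodeTensorOneMul : A ⊗[R] (A ⊗[R] A) →ₗ[R] A ⊗[R] A :=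
  lift (LinearMap.mul R (A ⊗[R] A) ∘ₗ Algebra.TensorProduct.includeLeft.toLinearMap ∘ₗ
    antipode R)

@[simp]
lemma antipodeTensorOneMul_tmul (x : A) (w : A ⊗[R] A) :
    antipodeTensorOneMul (x ⊗ₜ w) = (antipode R x ⊗ₜ 1) * w :=
  rfl

lemma antipodeTensorOneMul_assoc_tmul (w : A ⊗[R] A) (y : A) :
    antipodeTensorOneMul (TensorProduct.assoc R A A A (w ⊗ₜ y)) =
      LinearMap.mul' R A ((antipode R).rTensor A w) ⊗ₜ y := by
  induction w using TensorProduct.induction_on with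
  | zero => simp
  | tmul x₁ x₂ => simp
  | add w₁ w₂ h₁ h₂ => simp only [add_tmul, map_add, h₁, h₂]

/-- `∑ (S(a₍₁₎) ⊗ 1) Δ(a₍₂₎) = 1 ⊗ a`. -/
lemma antipodeTensorOneMul_lTensor_comul_comul (a : A) :
    antipodeTensorOneMul ((comul (R := R)).lTensor A (comul a)) = 1 ⊗ₜ a := by
  have key : antipodeTensorOneMul ∘ₗ (TensorProduct.assoc R A A A).toLinearMap ∘ₗ
      (comul (R := R)).rTensor A = (Algebra.linearMap R A ∘ₗ counit).rTensor A :=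
    TensorProduct.ext' fun x y => by simp [antipodeTensorOneMul_assoc_tmul]
  rw [← coassoc_apply]
  simpa [LinearMap.rTensor_comp_apply] using LinearMap.congr_fun key (comul a)

def IsLeftIntegral (φ : A →ₗ[R] R) : Prop :=
  ∀ a, sliceRight φ (comul a) = φ a • 1

lemma IsLeftIntegral.sliceRight_comul {φ : A →ₗ[R] R} (hφ : IsLeftIntegral φ) (a b : A) :
    sliceRight (φ ∘ₗ LinearMap.mulLeft R a) (comul b) =
      antipode R (sliceRight (φ ∘ₗ LinearMap.mulRight R b) (comul a)) := by
  let Φ := sliceRight φ ∘ₗ LinearMap.mulRight R (comul (R := R) b)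
  have hΦ (w : A ⊗[R] A) : Φ (antipodeTensorOneMul ((comul (R := R)).lTensor A w)) =
      antipode R (sliceRight (φ ∘ₗ LinearMap.mulRight R b) w) := by
    induction w using TensorProduct.induction_on with
    | zero => simp
    | tmul x y =>
      have : Φ ((antipode R x ⊗ₜ 1) * comul y) = antipode R x * (φ (y * b) • 1) := by
        rw [← hφ, Bialgebra.comul_mul, ← sliceRight_tmul_one_mul, ← mul_assoc]
        rfl
      simpa [mul_smul_comm] using this
    | add x y hx hy => simp only [map_add, hx, hy]
  calc sliceRight (φ ∘ₗ LinearMap.mulLeft R a) (comul b) = Φ (1 ⊗ₜ a) := by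
        simp [Φ, sliceRight_one_tmul_mul]
    _ = _ := by rw [← antipodeTensorOneMul_lTensor_comul_comul, hΦ]

end HopfAlgebra

theorem comul_modular_automorphism_left
    {A : Type*} [Ring A] [HopfAlgebra ℂ A]
    (φ : A →ₗ[ℂ] ℂ)
    (hφL : ∀ a : A,
      (TensorProduct.rid ℂ A) (LinearMap.lTensor A φ (Coalgebra.comul a)) = φ a • (1 : A))
    (hφf2 : ∀ a : A, (∀ b : A, φ (b * a) = 0) → a = 0)
    (σ : A ≃ₐ[ℂ] A) (hσ : ∀ a b : A, φ (a * b) = φ (b * σ a)) :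
    ∀ a : A,
      Coalgebra.comul (R := ℂ) (σ a) =
        TensorProduct.map (antipode (R := ℂ) ∘ₗ antipode (R := ℂ)) σ.toLinearMap
          (Coalgebra.comul a) := by
  intro a
  have hφ : IsLeftIntegral φ := hφL
  have mulLeft_eq (c : A) : φ ∘ₗ LinearMap.mulLeft ℂ c = φ ∘ₗ LinearMap.mulRight ℂ (σ c) :=
    LinearMap.ext (hσ c)
  have mulRight_eq (c : A) :
      φ ∘ₗ LinearMap.mulRight ℂ c = (φ ∘ₗ LinearMap.mulLeft ℂ c) ∘ₗ σ.toLinearMap :=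
    LinearMap.ext fun y => hσ y c
  rw [← sub_eq_zero]
  refine eq_zero_of_forall_sliceRight_eq_zero (fun b => φ ∘ₗ LinearMap.mulLeft ℂ b) hφf2 _
    fun b => ?_
  rw [map_sub, sub_eq_zero, sliceRight_map, hφ.sliceRight_comul, ← mulLeft_eq,
    hφ.sliceRight_comul, mulRight_eq, LinearMap.comp_apply]
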